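/- Let R be a Noetherian local-like ring in the following sense: R is an integral domain, and every finitely generated ideal I of R which is stable under a group G of ring automorphisms and nonzero equals R. Let M be a finite free R-module of rank r with a φ-semilinear endomorphism φ_M (φ : R → R an injective endomorphism) commuting with a semilinear G-action, such that the linearization R ⊗_{φ,R} M → M is injective. If additionally every finite R-module with injective linearization is projective, and finite projective R-modules are free, then det(φ_M) generates a G-stable ideal, hence is a unit, hence M is an étale φ-module (linearization is an isomorphism). -/

import Mathlib

open TensorProduct

/-- Type synonym: `M` with the `R`-module structure twisted by `φ` (i.e. `r • m = φ r • m`).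
For `M = R` this is "`R` viewed as an `R`-module via `φ`". -/
@[nolint unusedArguments]
def Twist (R : Type*) [CommRing R] (φ : R →+* R) (M : Type*) [AddCommGroup M] [Module R M] :
    Type _ := M

namespace Twist

variable {R : Type*} [CommRing R] (φ : R →+* R) {M : Type*} [AddCommGroup M] [Module R M]

instance : AddCommGroup (Twist R φ M) := inferInstanceAs (AddCommGroup M)

instance : Module R (Twist R φ M) := Module.compHom M φ

theorem smul_def (r : R) (m : M) :
    (r • (show Twist R φ M from m)) = (show Twist R φ M from (φ r • m)) := rfl

end Twist

/-- The linearization `R ⊗_{φ,R} M → M`, `x ⊗ m ↦ x • φM m`, of a `φ`-semilinear map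
`φM : M → M`.  It is `R`-linear when the left tensor factor and the target carry the
`φ`-twisted module structures.  An étale `φ`-module is a finite module `M` for which this
map is bijective. -/
noncomputable def linearization {R : Type*} [CommRing R] (φ : R →+* R)
    {M : Type*} [AddCommGroup M] [Module R M] (φM : M →ₛₗ[φ] M) :
    TensorProduct R (Twist R φ R) M →ₗ[R] Twist R φ M :=
  TensorProduct.lift
    { toFun := fun x =>
        { toFun := fun m => show Twist R φ M from (show R from x) • φM m
          map_add' := fun a b => by
            show ((show R from x) • φM (a + b) : M) = (show R from x) • φM a + (show R from x) • φM b
            rw [map_add]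
            exact smul_add _ _ _
          map_smul' := fun r m => by
            show ((show R from x) • φM (r • m) : M) = φ r • ((show R from x) • φM m)
            rw [LinearMap.map_smulₛₗ, smul_comm] }
      map_add' := fun x y => by
        ext m
        show ((show R from x) + (show R from y)) • φM m = (show R from x) • φM m + (show R from y) • φM m
        exact add_smul _ _ _
      map_smul' := fun r x => by
        ext m
        show (φ r * (show R from x)) • φM m = (φ r • ((show R from x) • φM m) : M)
        exact mul_smul _ _ _ }

/-! Let `P` be the matrix of `φM` and `C g` that of the action of `g` in the basis `b`.
Since `φM` commutes with `g`, `P * φ (C g) = C g * g • P`, and `C g` is invertible, so taking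
determinants shows `det P ∣ g • det P`: the principal ideal `(det P)` is `G`-stable. In
coordinates the linearization is `c ↦ P *ᵥ c`, so its injectivity forces `det P ≠ 0`. Hence
`(det P) = R`, `P` is invertible, and the linearization is also surjective. -/

open Matrix

namespace Module.Basis

variable {ι R M : Type*} [Fintype ι] [CommRing R] [AddCommGroup M] [Module R M]
  (b : Basis ι R M) {σ : R →+* R}

theorem repr_semilinearMap_apply (f : M →ₛₗ[σ] M) (m : M) :
    ⇑(b.repr (f m)) = b.toMatrix (f ∘ b) *ᵥ (σ ∘ b.repr m) := by
  ext i
  nth_rw 1 [← b.sum_repr m]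
  simp only [map_sum, LinearMap.map_smulₛₗ, map_smul, Finsupp.coe_finsetSum, Finset.sum_apply,
    Finsupp.smul_apply, smul_eq_mul, mulVec, dotProduct, toMatrix_apply, Function.comp_apply,
    mul_comm]

theorem toMatrix_semilinearMap_comp {ι' : Type*} (f : M →ₛₗ[σ] M) (v : ι' → M) :
    b.toMatrix (f ∘ v) = b.toMatrix (f ∘ b) * (b.toMatrix v).map σ := by
  ext i j
  rw [toMatrix_apply, Function.comp_apply, repr_semilinearMap_apply]
  rfl

end Module.Basis

theorem Matrix.det_dvd_map_det_of_mul_map_eq {ι R : Type*} [Fintype ι] [DecidableEq ι]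
    [CommRing R] {σ τ : R →+* R} {P C : Matrix ι ι R} (hC : IsUnit C.det)
    (h : P * C.map σ = C * P.map τ) : P.det ∣ τ P.det := by
  have hdet : P.det * σ C.det = C.det * τ P.det := by
    simpa only [det_mul, ← RingHom.mapMatrix_apply, ← RingHom.map_det] using congrArg det h
  obtain ⟨u, hu⟩ := hC
  refine ⟨↑u⁻¹ * σ C.det, ?_⟩
  calc τ P.det = ↑u⁻¹ * (C.det * τ P.det) := by rw [← hu, Units.inv_mul_cancel_left]
    _ = P.det * (↑u⁻¹ * σ C.det) := by rw [← hdet, mul_left_comm]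

section SemilinearAction

variable {G R M : Type*} [Group G] [CommRing R] [MulSemiringAction G R]
  [AddCommGroup M] [Module R M] [DistribMulAction G M]

def smulSemilinearMap (hsemi : ∀ (g : G) (x : R) (m : M), g • (x • m) = (g • x) • (g • m))
    (g : G) : M →ₛₗ[MulSemiringAction.toRingHom G R g] M where
  toFun := (g • ·)
  map_add' := smul_add g
  map_smul' := hsemi g

variable {ι : Type*} [Fintype ι] [DecidableEq ι] (b : Module.Basis ι R M)

theorem isUnit_det_toMatrix_smul
    (hsemi : ∀ (g : G) (x : R) (m : M), g • (x • m) = (g • x) • (g • m)) (g : G) :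
    IsUnit (b.toMatrix (g • ⇑b)).det := by
  have h := b.toMatrix_semilinearMap_comp (smulSemilinearMap hsemi g) (g⁻¹ • ⇑b)
  refine isUnit_det_of_right_inverse (h.symm.trans ?_)
  convert b.toMatrix_self
  exact smul_inv_smul g _

theorem det_toMatrix_dvd_smul_det
    (hsemi : ∀ (g : G) (x : R) (m : M), g • (x • m) = (g • x) • (g • m))
    {φ : R →+* R} (φM : M →ₛₗ[φ] M)
    (hcomm : ∀ (g : G) (m : M), φM (g • m) = g • φM m) (g : G) :
    (b.toMatrix (φM ∘ b)).det ∣ g • (b.toMatrix (φM ∘ b)).det := by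
  have h₁ := b.toMatrix_semilinearMap_comp φM (g • ⇑b)
  have h₂ := b.toMatrix_semilinearMap_comp (smulSemilinearMap hsemi g) (φM ∘ b)
  refine Matrix.det_dvd_map_det_of_mul_map_eq (isUnit_det_toMatrix_smul b hsemi g)
    (h₁.symm.trans (Eq.trans ?_ h₂))
  congr 1
  funext j
  exact hcomm g (b j)

end SemilinearAction

section Linearization

variable {ι R M : Type*} [Fintype ι] [CommRing R] [AddCommGroup M] [Module R M]
  {φ : R →+* R} (φM : M →ₛₗ[φ] M) (b : Module.Basis ι R M)

theorem TensorProduct.eq_zero_of_sum_tmul_basis_eq_zero {N : Type*} [AddCommGroup N]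
    [Module R N] {c : ι → N} (h : ∑ i, c i ⊗ₜ[R] b i = 0) : c = 0 := by
  have := sum_tmul_basis_right_eq_zero b (Finsupp.equivFunOnFinite.symm c)
    (by rwa [Finsupp.sum_fintype _ _ (by simp)])
  funext i
  simpa using DFunLike.congr_fun this i

theorem linearization_sum_tmul_basis (c : ι → R) :
    (linearization φ φM (∑ i, (show Twist R φ R from c i) ⊗ₜ[R] b i) : M)
      = b.equivFun.symm (b.toMatrix (φM ∘ b) *ᵥ c) := by
  rw [map_sum]
  show ∑ i, c i • φM (b i) = _
  apply b.equivFun.injective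
  rw [LinearEquiv.apply_symm_apply]
  funext k
  simp [mulVec, dotProduct, Module.Basis.toMatrix_apply, mul_comm]

theorem det_toMatrix_ne_zero_of_injective_linearization [IsDomain R] [DecidableEq ι]
    (hinj : Function.Injective (linearization φ φM)) : (b.toMatrix (φM ∘ b)).det ≠ 0 := by
  intro h
  obtain ⟨c, hc, hPc⟩ := Matrix.exists_mulVec_eq_zero_iff.mpr h
  have h₀ : linearization φ φM (∑ i, (show Twist R φ R from c i) ⊗ₜ[R] b i)
      = linearization φ φM 0 := by
    rw [map_zero]
    exact (linearization_sum_tmul_basis φM b c).trans (by rw [hPc, map_zero]; rfl)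
  exact hc (TensorProduct.eq_zero_of_sum_tmul_basis_eq_zero b
    (c := show ι → Twist R φ R from c) (hinj h₀))

theorem surjective_linearization_of_isUnit_det [DecidableEq ι]
    (h : IsUnit (b.toMatrix (φM ∘ b)).det) : Function.Surjective (linearization φ φM) := by
  intro m
  refine ⟨∑ i, (show Twist R φ R from
    ((b.toMatrix (φM ∘ b))⁻¹ *ᵥ b.equivFun (show M from m)) i) ⊗ₜ[R] b i, ?_⟩
  rw [linearization_sum_tmul_basis, mulVec_mulVec, mul_nonsing_inv _ h, one_mulVec]
  exact b.equivFun.symm_apply_apply _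

end Linearization

theorem statement_10_general {R : Type*} [CommRing R] [IsDomain R]
    {G : Type*} [Group G] [MulSemiringAction G R]
    (hGideal : ∀ I : Ideal R, I.FG → (∀ g : G, ∀ x ∈ I, g • x ∈ I) → I ≠ ⊥ → I = ⊤)
    (φ : R →+* R)
    {M : Type*} [AddCommGroup M] [Module R M]
    {r : ℕ} (b : Module.Basis (Fin r) R M)
    (φM : M →ₛₗ[φ] M)
    [DistribMulAction G M]
    (hsemi : ∀ (g : G) (x : R) (m : M), g • (x • m) = (g • x) • (g • m))
    (hcomm : ∀ (g : G) (m : M), φM (g • m) = g • φM m)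
    (hinj : Function.Injective (linearization φ φM)) :
    (∀ g : G, ∀ x ∈ Ideal.span {(Matrix.of fun i j => b.repr (φM (b j)) i).det},
        g • x ∈ Ideal.span {(Matrix.of fun i j => b.repr (φM (b j)) i).det}) ∧
    IsUnit (Matrix.of fun i j => b.repr (φM (b j)) i).det ∧
    Function.Bijective (linearization φ φM) := by
  change (∀ g : G, ∀ x ∈ Ideal.span {(b.toMatrix (φM ∘ b)).det}, _) ∧
    IsUnit (b.toMatrix (φM ∘ b)).det ∧ _
  set d := (b.toMatrix (φM ∘ b)).det
  have hstable : ∀ g : G, ∀ x ∈ Ideal.span {d}, g • x ∈ Ideal.span {d} := by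
    intro g x hx
    obtain ⟨y, rfl⟩ := Ideal.mem_span_singleton'.mp hx
    rw [smul_mul']
    exact Ideal.mul_mem_left _ _
      (Ideal.mem_span_singleton.mpr (det_toMatrix_dvd_smul_det b hsemi φM hcomm g))
  have hne : Ideal.span {d} ≠ ⊥ := by
    rw [Ne, Ideal.span_singleton_eq_bot]
    exact det_toMatrix_ne_zero_of_injective_linearization φM b hinj
  have hunit : IsUnit d :=
    Ideal.span_singleton_eq_top.mp (hGideal _ (Submodule.fg_span_singleton _) hstable hne)
  exact ⟨hstable, hunit, hinj, surjective_linearization_of_isUnit_det φM b hunit⟩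

/-- Let `R` be an integral domain on which a group `G` acts by ring
automorphisms such that every nonzero finitely generated `G`-stable ideal equals `R`.  Let
`M` be finite free of rank `r` with a `φ`-semilinear endomorphism `φM` (with `φ` injective,
commuting with the `G`-action) and a compatible semilinear `G`-action, such that the
linearization `R ⊗_{φ,R} M → M` is injective.  If moreover every finite `R`-module with
injective linearization is projective and finite projective `R`-modules are free, then the
ideal generated by `det φM` is `G`-stable, `det φM` is a unit, and `M` is étale (the
linearization is bijective). -/
theorem statement_10 {R : Type*} [CommRing R] [IsDomain R]
    {G : Type*} [Group G] [MulSemiringAction G R]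
    (hGideal : ∀ I : Ideal R, I.FG → (∀ g : G, ∀ x ∈ I, g • x ∈ I) → I ≠ ⊥ → I = ⊤)
    (φ : R →+* R) (hφinj : Function.Injective φ)
    (hφG : ∀ (g : G) (x : R), φ (g • x) = g • φ x)
    {M : Type*} [AddCommGroup M] [Module R M]
    {r : ℕ} (b : Module.Basis (Fin r) R M)
    (φM : M →ₛₗ[φ] M)
    [DistribMulAction G M]
    (hsemi : ∀ (g : G) (x : R) (m : M), g • (x • m) = (g • x) • (g • m))
    (hcomm : ∀ (g : G) (m : M), φM (g • m) = g • φM m)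
    (hinj : Function.Injective (linearization φ φM))
    (hproj : ∀ (N : Type _) [AddCommGroup N] [Module R N], Module.Finite R N →
      ∀ ψ : N →ₛₗ[φ] N, Function.Injective (linearization φ ψ) → Module.Projective R N)
    (hfree : ∀ (N : Type _) [AddCommGroup N] [Module R N], Module.Finite R N →
      Module.Projective R N → Module.Free R N) :
    (∀ g : G, ∀ x ∈ Ideal.span {(Matrix.of fun i j => b.repr (φM (b j)) i).det},
        g • x ∈ Ideal.span {(Matrix.of fun i j => b.repr (φM (b j)) i).det}) ∧
    IsUnit (Matrix.of fun i j => b.repr (φM (b j)) i).det ∧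
    Function.Bijective (linearization φ φM) :=
  statement_10_general hGideal φ b φM hsemi hcomm hinj
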